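/- Define for a partition ν of n the polynomial g_ν(x) = ∏_{i=1}^{n} (x + ν_i − i), where ν_i = 0 for i > ℓ(ν). Then for any partition ν of n ≥ 1, ∑_{λ ∈ ν∖1} g_λ(x)/H_λ = (g_ν(x+1) − g_ν(x))/H_ν as polynomials in x. -/

import Mathlib

open Finset

/-- The content of a box with (0-indexed) row `c.1` and column `c.2`. -/
def boxContent (c : ℕ × ℕ) : ℤ := (c.2 : ℤ) - (c.1 : ℤ)

/-- The hook length of a box `c` in a diagram with set of boxes `s`:
arm length plus leg length plus one. -/
def hook (s : Finset (ℕ × ℕ)) (c : ℕ × ℕ) : ℕ :=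
  (s.filter fun d => d.1 = c.1 ∧ c.2 < d.2).card +
  (s.filter fun d => d.2 = c.2 ∧ c.1 < d.1).card + 1

/-- The product of all hook lengths. -/
def Hprod (s : Finset (ℕ × ℕ)) : ℕ := ∏ c ∈ s, hook s c

/-- The removable corner boxes of a diagram with boxes `s`. -/
def corners (s : Finset (ℕ × ℕ)) : Finset (ℕ × ℕ) :=
  s.filter fun c => (c.1 + 1, c.2) ∉ s ∧ (c.1, c.2 + 1) ∉ s


/-- The length of row `i` (0-indexed) of the diagram with boxes `s`. -/
def rowLenS (s : Finset (ℕ × ℕ)) (i : ℕ) : ℕ := (s.filter fun c => c.1 = i).card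

/-- Han's `g`-function of the diagram with boxes `s` (with `|s|` boxes):
`g(x) = ∏_{i=1}^{|s|} (x + ν_i − i)`, parts padded by zeros. -/
noncomputable def gpoly (s : Finset (ℕ × ℕ)) : Polynomial ℚ :=
  ∏ i ∈ range s.card, (Polynomial.X + Polynomial.C ((rowLenS s i : ℚ) - ((i : ℚ) + 1)))

/-!
Index the rows from `0` and put `a i = ν_{i+1} - (i + 1)` for `i < n = |ν|`, so that
`g_ν = ∏ (X + a i)`. The `a i` are distinct, and Lagrange interpolation at the nodes `-a i` gives
`g_ν(X + 1) - g_ν(X) = ∑ₖ w k ∏_{j ≠ k} (X + a j)` with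
`w k = ∏_{j ≠ k} (a k - a j - 1) / (a k - a j)`.
The weight `w k` vanishes when rows `k` and `k + 1` have the same length, so only the rows ending in
a removable corner (and possibly the last row `n - 1`) survive.

Removing the corner at `(r, q)` lowers by one exactly the hooks in row `r` and column `q`. In the
column these hooks are `a i - a r + 1` (`i < r`); in the row, the hooks left of the corner and the
numbers `a r - a l` (`r < l < n`) together fill `[2, a r + n]` exactly once, so their ratios
telescope. Hence `H_ν / H_λ = (a r + n) w r`.

If `ν` is a single column, only `w (n - 1)` survives and both sides agree at once. Otherwise the
last row is empty, `a (n - 1) = -n`, and each corner term splits into the interpolation term of its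
row plus a multiple of `∏_{j < n - 1} (X + a j)`. What is left is `∑ₖ w k (a k + n - 1) = 0`; it
follows from the two top coefficients of the interpolation formula, `∑ w k = n` and
`∑ w k a k = ∑ a k - C(n, 2)`, together with `∑ a k = -C(n, 2)`, i.e. `|ν| = n`.
-/

open Polynomial

section HanWeight

variable {K ι : Type*} [Field K] (s : Finset ι) (a : ι → K)

theorem coeff_prod_X_add_C_card : (∏ j ∈ s, (X + C (a j))).coeff #s = 1 := by
  have hmonic : (∏ j ∈ s, (X + C (a j))).Monic :=
    monic_prod_of_monic _ _ fun j _ => monic_X_add_C _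
  simpa [natDegree_prod_of_monic _ _ fun j _ => monic_X_add_C (a j)] using hmonic.coeff_natDegree

/- The coefficients below are those of `X ^ (#s - 1)` and `X ^ (#s - 2)` in the products;
multiplying by a power of `X` keeps the indices free of truncated subtraction. -/
theorem coeff_X_mul_prod_X_add_C_card :
    (X * ∏ j ∈ s, (X + C (a j))).coeff #s = ∑ j ∈ s, a j := by
  classical
  induction s using Finset.induction_on with
  | empty => simp
  | insert i s hi ih =>
    rw [prod_insert hi, sum_insert hi, card_insert_of_notMem hi, mul_left_comm, add_mul,
      coeff_add, coeff_X_mul, ih, coeff_C_mul, coeff_X_mul, coeff_prod_X_add_C_card, add_comm,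
      mul_one]

theorem coeff_X_mul_prod_add_one_sub_prod :
    (X * (∏ j ∈ s, (X + C (a j + 1)) - ∏ j ∈ s, (X + C (a j)))).coeff #s = (#s : K) := by
  rw [mul_sub, coeff_sub, coeff_X_mul_prod_X_add_C_card, coeff_X_mul_prod_X_add_C_card,
    sum_add_distrib]
  simp

theorem coeff_X_sq_mul_prod_add_one_sub_prod :
    (X ^ 2 * (∏ j ∈ s, (X + C (a j + 1)) - ∏ j ∈ s, (X + C (a j)))).coeff #s
      = (#s - 1) * ∑ j ∈ s, a j + (#s).choose 2 := by
  classical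
  induction s using Finset.induction_on with
  | empty => simp
  | insert i s hi ih =>
    have hstep : X ^ 2 * (∏ j ∈ insert i s, (X + C (a j + 1)) - ∏ j ∈ insert i s, (X + C (a j)))
        = (X + C (a i)) * (X ^ 2 * (∏ j ∈ s, (X + C (a j + 1)) - ∏ j ∈ s, (X + C (a j))))
          + X * (X * ∏ j ∈ s, (X + C (a j + 1))) := by
      rw [prod_insert hi, prod_insert hi, map_add, map_one]
      ring
    rw [hstep, card_insert_of_notMem hi, coeff_add, add_mul, coeff_add, coeff_X_mul, ih,
      coeff_C_mul, pow_two, mul_assoc, coeff_X_mul, coeff_X_mul_prod_add_one_sub_prod, coeff_X_mul,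
      coeff_X_mul_prod_X_add_C_card, sum_insert hi, sum_add_distrib, Nat.choose_succ_succ']
    push_cast [Nat.choose_one_right]
    simp only [sum_const, nsmul_eq_mul, mul_one]
    ring

theorem prod_X_add_C_comp_X_add_one :
    (∏ j ∈ s, (X + C (a j))).comp (X + 1) = ∏ j ∈ s, (X + C (a j + 1)) := by
  rw [Polynomial.prod_comp]
  refine prod_congr rfl fun j _ => ?_
  rw [add_comp, X_comp, C_comp, map_add, map_one]
  ring

variable [DecidableEq ι]

def hanWeight (k : ι) : K := ∏ j ∈ s.erase k, (a k - a j - 1) / (a k - a j)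

theorem hanWeight_eq_zero {j k : ι} (hj : j ∈ s) (hjk : j ≠ k) (h : a k = a j + 1) :
    hanWeight s a k = 0 :=
  prod_eq_zero (mem_erase.mpr ⟨hjk, hj⟩) (by rw [h]; ring)

theorem prod_add_one_sub_prod_eq_sum_hanWeight (ha : Set.InjOn a s) :
    ∏ j ∈ s, (X + C (a j + 1)) - ∏ j ∈ s, (X + C (a j))
      = ∑ k ∈ s, C (hanWeight s a k) * ∏ j ∈ s.erase k, (X + C (a j)) := by
  have hnodal (t : Finset ι) (b : ι → K) :
      ∏ j ∈ t, (X + C (b j)) = Lagrange.nodal t (fun j => -b j) := by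
    simp [Lagrange.nodal, sub_eq_add_neg]
  have hv : Set.InjOn (fun k => -a k) s := fun x hx y hy h => ha hx hy (neg_inj.mp h)
  refine Polynomial.eq_of_degrees_lt_of_eval_index_eq s hv ?_ ?_ fun i hi => ?_
  · simp only [hnodal]
    rw [← Lagrange.degree_nodal (v := fun j => -(a j + 1))]
    exact degree_sub_lt_left (by simp only [Lagrange.degree_nodal]) Lagrange.nodal_ne_zero
      (by simp only [Lagrange.nodal_monic.leadingCoeff])
  · rw [← mem_degreeLT]
    refine Submodule.sum_mem _ fun k hk => ?_
    rw [← smul_eq_C_mul]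
    refine Submodule.smul_mem _ _ ?_
    rw [mem_degreeLT, hnodal, Lagrange.degree_nodal, Nat.cast_lt]
    exact card_erase_lt_of_mem hk
  · have hL (k : ι) (hk : k ≠ i) : eval (-a i) (∏ j ∈ s.erase k, (X + C (a j))) = 0 := by
      rw [eval_prod]
      exact prod_eq_zero (mem_erase.mpr ⟨hk.symm, hi⟩) (by simp)
    rw [eval_finsetSum, sum_eq_single_of_mem i hi fun k _ hk => by rw [eval_mul, hL k hk,
      mul_zero], eval_sub, eval_prod, eval_prod,
      prod_eq_zero (f := fun j => eval (-a i) (X + C (a j))) hi (by simp), sub_zero,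
      ← mul_prod_erase s _ hi, eval_mul, eval_C, hanWeight, eval_prod, ← prod_mul_distrib]
    simp only [eval_add, eval_X, eval_C, neg_add_cancel_left, one_mul]
    refine prod_congr rfl fun j hj => ?_
    have hij : a i - a j ≠ 0 :=
      sub_ne_zero.mpr fun h => (mem_erase.mp hj).1 (ha hi (mem_of_mem_erase hj) h).symm
    field_simp
    ring

theorem sum_hanWeight (ha : Set.InjOn a s) : ∑ k ∈ s, hanWeight s a k = #s := by
  have h := congrArg (fun p => (X * p).coeff #s) (prod_add_one_sub_prod_eq_sum_hanWeight s a ha)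
  rw [coeff_X_mul_prod_add_one_sub_prod, mul_sum, finsetSum_coeff] at h
  rw [h]
  refine sum_congr rfl fun k hk => ?_
  rw [mul_left_comm, coeff_C_mul, ← card_erase_add_one hk, coeff_X_mul, coeff_prod_X_add_C_card,
    mul_one]

theorem sum_hanWeight_mul (ha : Set.InjOn a s) :
    ∑ k ∈ s, hanWeight s a k * a k = ∑ j ∈ s, a j - (#s).choose 2 := by
  have h := congrArg (fun p => (X ^ 2 * p).coeff #s)
    (prod_add_one_sub_prod_eq_sum_hanWeight s a ha)
  rw [mul_sum, finsetSum_coeff, coeff_X_sq_mul_prod_add_one_sub_prod] at h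
  have hterm : ∀ k ∈ s, (X ^ 2 * (C (hanWeight s a k) * ∏ j ∈ s.erase k, (X + C (a j)))).coeff #s
      = hanWeight s a k * (∑ j ∈ s, a j - a k) := by
    intro k hk
    rw [mul_left_comm, coeff_C_mul, ← card_erase_add_one hk, pow_two, mul_assoc, coeff_X_mul,
      coeff_X_mul_prod_X_add_C_card, sum_erase_eq_sub hk]
  rw [sum_congr rfl hterm] at h
  have hw := sum_hanWeight s a ha
  rw [sum_congr rfl fun k _ => mul_sub _ _ _, sum_sub_distrib, ← sum_mul, hw] at h
  linear_combination h

end HanWeight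

theorem prod_Icc_two_div_sub_one {B : ℤ} (hB : 1 ≤ B) : ∏ m ∈ Icc 2 B, (m : ℚ) / (m - 1) = B := by
  induction B, hB using Int.leInduction with
  | base => simp
  | succ B hB ih =>
    rw [← insert_Icc_right_eq_Icc_add_one (by omega), prod_insert (by simp), ih]
    have : (B : ℚ) ≠ 0 := by exact_mod_cast (show B ≠ 0 by omega)
    push_cast
    rw [add_sub_cancel_right, div_mul_cancel₀ _ this]

theorem hook_erase_add (s : Finset (ℕ × ℕ)) {c : ℕ × ℕ} (hc : c ∈ s) (d : ℕ × ℕ) :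
    hook (s.erase c) d + (if d.1 = c.1 ∧ d.2 < c.2 ∨ d.2 = c.2 ∧ d.1 < c.1 then 1 else 0)
      = hook s d := by
  have hcard (t : Finset (ℕ × ℕ)) : #(t.erase c) + (if c ∈ t then 1 else 0) = #t := by
    split_ifs with h
    · exact card_erase_add_one h
    · rw [erase_eq_of_notMem h, add_zero]
  rw [hook, hook, filter_erase, filter_erase, ← hcard (s.filter _), ← hcard (s.filter _)]
  simp only [mem_filter, hc, true_and]
  split_ifs <;> omega

namespace YoungDiagram

section

variable (μ : YoungDiagram)

/-- `a i = ν_{i+1} - (i + 1)` in the paper's `1`-indexed notation. -/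
def shiftedRowLen (i : ℕ) : ℤ := μ.rowLen i - i - 1

theorem shiftedRowLen_strictAnti : StrictAnti μ.shiftedRowLen := fun i j hij => by
  have := μ.rowLen_anti i j hij.le
  unfold shiftedRowLen
  omega

theorem injective_cast_shiftedRowLen {K : Type*} [Ring K] [CharZero K] :
    Function.Injective (fun i => (μ.shiftedRowLen i : K)) :=
  Int.cast_injective.comp μ.shiftedRowLen_strictAnti.injective

theorem rowLenS_cells (i : ℕ) : rowLenS μ.cells i = μ.rowLen i := by
  rw [rowLenS, rowLen_eq_card, row]

theorem gpoly_cells :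
    gpoly μ.cells = ∏ i ∈ range #μ.cells, (X + C (μ.shiftedRowLen i : ℚ)) := by
  refine prod_congr rfl fun i _ => ?_
  rw [rowLenS_cells, shiftedRowLen]
  push_cast
  congr 2
  ring

theorem colLen_zero_le_card : μ.colLen 0 ≤ #μ.cells := by
  rw [colLen_eq_card]
  exact card_le_card (filter_subset _ _)

theorem card_cells_eq_sum_rowLen {N : ℕ} (hN : μ.colLen 0 ≤ N) :
    #μ.cells = ∑ i ∈ range N, μ.rowLen i := by
  have hcells : μ.cells = (range N).biUnion μ.row := by
    ext ⟨i, j⟩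
    simp only [mem_biUnion, mem_range, mem_row_iff, mem_cells]
    refine ⟨fun h => ⟨i, ?_, h, rfl⟩, fun ⟨_, _, h, _⟩ => h⟩
    have := μ.colLen_anti 0 j (Nat.zero_le j)
    have := mem_iff_lt_colLen.mp h
    omega
  rw [hcells, card_biUnion fun i _ i' _ hii' => disjoint_left.mpr fun d hd hd' =>
    hii' ((mem_row_iff.mp hd).2.symm.trans (mem_row_iff.mp hd').2)]
  exact sum_congr rfl fun i _ => (μ.rowLen_eq_card).symm

theorem rowLen_card_eq_zero : μ.rowLen #μ.cells = 0 := by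
  by_contra h
  have := mem_iff_lt_colLen.mp (mem_iff_lt_rowLen.mpr (Nat.pos_of_ne_zero h))
  have := μ.colLen_zero_le_card
  omega

theorem colLen_zero_le_of_rowLen_eq_zero {m : ℕ} (h : μ.rowLen m = 0) : μ.colLen 0 ≤ m := by
  by_contra hlt
  have := mem_iff_lt_rowLen.mp (mem_iff_lt_colLen.mpr (show m < μ.colLen 0 by omega))
  omega

theorem rowLen_eq_one_of_rowLen_ne_zero (hlast : μ.rowLen (#μ.cells - 1) ≠ 0) {i : ℕ}
    (hi : i < #μ.cells) : μ.rowLen i = 1 := by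
  have hone : ∀ i ∈ range #μ.cells, 1 = μ.rowLen i := by
    refine (sum_eq_sum_iff_of_le fun i hi => ?_).mp ?_
    · have := μ.rowLen_anti i (#μ.cells - 1) (by rw [mem_range] at hi; omega)
      omega
    · rw [← card_cells_eq_sum_rowLen μ μ.colLen_zero_le_card, sum_const, card_range, smul_eq_mul,
        mul_one]
  exact (hone i (mem_range.mpr hi)).symm

theorem sum_hanWeight_mul_shiftedRowLen_add :
    ∑ k ∈ range #μ.cells, hanWeight (range #μ.cells) (fun i => (μ.shiftedRowLen i : ℚ)) k *
      (μ.shiftedRowLen k + #μ.cells - 1) = 0 := by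
  have ha := (μ.injective_cast_shiftedRowLen (K := ℚ)).injOn (s := range #μ.cells)
  have hsum : ∑ k ∈ range #μ.cells, (μ.shiftedRowLen k : ℚ) = -((#μ.cells).choose 2 : ℚ) := by
    simp only [shiftedRowLen]
    push_cast
    rw [sum_sub_distrib, sum_sub_distrib, ← Nat.cast_sum, ← Nat.cast_sum,
      ← card_cells_eq_sum_rowLen μ μ.colLen_zero_le_card, sum_range_id, ← Nat.choose_two_right]
    simp only [sum_const, card_range, nsmul_eq_mul, mul_one]
    ring
  simp only [mul_sub, mul_add, sum_sub_distrib, sum_add_distrib, ← sum_mul]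
  rw [sum_hanWeight_mul _ _ ha, sum_hanWeight _ _ ha, hsum, card_range, Nat.cast_choose_two]
  ring

theorem filter_arm (i j : ℕ) :
    μ.cells.filter (fun d => d.1 = i ∧ j < d.2) = (Ioo j (μ.rowLen i)).map (.sectR i ℕ) := by
  ext ⟨k, l⟩
  simp only [mem_filter, mem_cells, mem_map, mem_Ioo, Function.Embedding.sectR_apply,
    Prod.mk.injEq]
  constructor
  · rintro ⟨h, rfl, hl⟩
    exact ⟨l, ⟨hl, mem_iff_lt_rowLen.mp h⟩, rfl, rfl⟩
  · rintro ⟨l, ⟨hl, hlt⟩, rfl, rfl⟩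
    exact ⟨mem_iff_lt_rowLen.mpr hlt, rfl, hl⟩

theorem filter_leg (i j : ℕ) :
    μ.cells.filter (fun d => d.2 = j ∧ i < d.1) = (Ioo i (μ.colLen j)).map (.sectL ℕ j) := by
  ext ⟨k, l⟩
  simp only [mem_filter, mem_cells, mem_map, mem_Ioo, Function.Embedding.sectL_apply,
    Prod.mk.injEq]
  constructor
  · rintro ⟨h, rfl, hk⟩
    exact ⟨k, ⟨hk, mem_iff_lt_colLen.mp h⟩, rfl, rfl⟩
  · rintro ⟨k, ⟨hk, hlt⟩, rfl, rfl⟩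
    exact ⟨mem_iff_lt_colLen.mpr hlt, rfl, hk⟩

theorem hook_cells (i j : ℕ) :
    hook μ.cells (i, j) = (μ.rowLen i - j - 1) + (μ.colLen j - i - 1) + 1 := by
  rw [hook, filter_arm, filter_leg, card_map, card_map, Nat.card_Ioo, Nat.card_Ioo]

theorem strictAntiOn_hook_row (i : ℕ) :
    StrictAntiOn (fun j => hook μ.cells (i, j)) (Set.Iio (μ.rowLen i)) := by
  intro j _ j' hj' hjj'
  have := μ.colLen_anti j j' hjj'.le
  have := mem_iff_lt_colLen.mp (mem_iff_lt_rowLen.mpr hj')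
  simp only [hook_cells, Set.mem_Iio] at *
  omega

theorem mem_corners_iff {r q : ℕ} :
    (r, q) ∈ corners μ.cells ↔ μ.rowLen r = q + 1 ∧ μ.rowLen (r + 1) ≤ q := by
  simp only [corners, mem_filter, mem_cells, mem_iff_lt_rowLen]
  omega

end

section

variable {μ : YoungDiagram} {r q : ℕ}

theorem colLen_of_mem_corners (hc : (r, q) ∈ corners μ.cells) :
    μ.colLen q = r + 1 := by
  have ⟨hr, hr'⟩ := μ.mem_corners_iff.mp hc
  have h1 := mem_iff_lt_colLen.mp (mem_iff_lt_rowLen.mpr (show q < μ.rowLen r by omega))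
  have h2 : ¬ r + 1 < μ.colLen q := fun h => by
    have := mem_iff_lt_rowLen.mp (mem_iff_lt_colLen.mpr h)
    omega
  omega

theorem lt_colLen_of_mem_corners (hc : (r, q) ∈ corners μ.cells) {j : ℕ} (hj : j ≤ q) :
    r < μ.colLen j :=
  mem_iff_lt_colLen.mp (mem_iff_lt_rowLen.mpr (by have := (μ.mem_corners_iff.mp hc).1; omega))

theorem injOn_hook_row (hc : (r, q) ∈ corners μ.cells) :
    Set.InjOn (fun j => (hook μ.cells (r, j) : ℤ)) (range q) :=
  Nat.cast_injective.comp_injOn ((μ.strictAntiOn_hook_row r).injOn.mono fun j hj => by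
    rw [Set.mem_Iio, (μ.mem_corners_iff.mp hc).1]
    exact (mem_range.mp hj).trans (Nat.lt_succ_self q))

theorem disjoint_image_hook_row_image_sub (hc : (r, q) ∈ corners μ.cells) (N : ℕ) :
    Disjoint ((range q).image (fun j => (hook μ.cells (r, j) : ℤ)))
      ((Ioo r N).image (fun l => μ.shiftedRowLen r - μ.shiftedRowLen l)) := by
  rw [disjoint_left]
  rintro _ hx hy
  obtain ⟨j, hj, rfl⟩ := mem_image.mp hx
  obtain ⟨l, -, hl⟩ := mem_image.mp hy
  rw [mem_range] at hj
  have hrj := lt_colLen_of_mem_corners hc hj.le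
  rw [hook_cells, shiftedRowLen, shiftedRowLen, (μ.mem_corners_iff.mp hc).1] at hl
  -- `hl` says `colLen j + rowLen l = j + l + 1`, impossible whether or not `(l, j) ∈ μ`
  by_cases hlj : (l, j) ∈ μ
  · have := mem_iff_lt_rowLen.mp hlj
    have := mem_iff_lt_colLen.mp hlj
    omega
  · have := mt mem_iff_lt_rowLen.mpr hlj
    have := mt mem_iff_lt_colLen.mpr hlj
    omega

theorem image_hook_row_union_image_sub (hc : (r, q) ∈ corners μ.cells) {N : ℕ}
    (hN : μ.colLen 0 ≤ N) :
    (range q).image (fun j => (hook μ.cells (r, j) : ℤ))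
        ∪ (Ioo r N).image (fun l => μ.shiftedRowLen r - μ.shiftedRowLen l)
      = Icc 2 (μ.shiftedRowLen r + N) := by
  have ⟨hr, hr'⟩ := μ.mem_corners_iff.mp hc
  have hrN : r < N := (lt_colLen_of_mem_corners hc (Nat.zero_le q)).trans_le hN
  apply eq_of_subset_of_card_le
  · intro x hx
    rw [mem_Icc]
    rcases mem_union.mp hx with hx | hx
    · obtain ⟨j, hj, rfl⟩ := mem_image.mp hx
      have := μ.colLen_anti 0 j (Nat.zero_le j)
      have := lt_colLen_of_mem_corners hc (mem_range.mp hj).le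
      rw [mem_range] at hj
      rw [hook_cells, shiftedRowLen, hr]
      omega
    · obtain ⟨l, hl, rfl⟩ := mem_image.mp hx
      rw [mem_Ioo] at hl
      have := μ.rowLen_anti (r + 1) l hl.1
      rw [shiftedRowLen, shiftedRowLen, hr]
      omega
  · rw [card_union_of_disjoint (disjoint_image_hook_row_image_sub hc N),
      card_image_of_injOn (injOn_hook_row hc),
      card_image_of_injective _ fun l l' h => μ.shiftedRowLen_strictAnti.injective
        (sub_right_injective h),
      card_range, Nat.card_Ioo, Int.card_Icc, shiftedRowLen, hr]
    omega

theorem prod_hook_col_div (hc : (r, q) ∈ corners μ.cells) :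
    ∏ i ∈ range r, (hook μ.cells (i, q) : ℚ) / (hook μ.cells (i, q) - 1)
      = ∏ i ∈ range r, ((μ.shiftedRowLen r : ℚ) - μ.shiftedRowLen i - 1)
          / (μ.shiftedRowLen r - μ.shiftedRowLen i) := by
  refine prod_congr rfl fun i hi => ?_
  have hhook : (hook μ.cells (i, q) : ℤ) = μ.shiftedRowLen i - μ.shiftedRowLen r + 1 := by
    rw [mem_range] at hi
    have hr := (μ.mem_corners_iff.mp hc).1
    have := μ.rowLen_anti i r hi.le
    rw [hook_cells, colLen_of_mem_corners hc, shiftedRowLen, shiftedRowLen, hr]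
    omega
  rw [show (hook μ.cells (i, q) : ℚ) = μ.shiftedRowLen i - μ.shiftedRowLen r + 1 by
    exact_mod_cast hhook, ← neg_div_neg_eq]
  congr 1 <;> ring

theorem prod_hook_row_div (hc : (r, q) ∈ corners μ.cells) {N : ℕ} (hN : μ.colLen 0 ≤ N) :
    ∏ j ∈ range q, (hook μ.cells (r, j) : ℚ) / (hook μ.cells (r, j) - 1)
      = (μ.shiftedRowLen r + N) * ∏ l ∈ Ioo r N, ((μ.shiftedRowLen r : ℚ) - μ.shiftedRowLen l - 1)
          / (μ.shiftedRowLen r - μ.shiftedRowLen l) := by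
  have hunion := image_hook_row_union_image_sub hc hN
  have hB : 1 ≤ μ.shiftedRowLen r + N := by
    have := lt_colLen_of_mem_corners hc (Nat.zero_le q)
    have := μ.colLen_anti 0 q (Nat.zero_le q)
    rw [shiftedRowLen, (μ.mem_corners_iff.mp hc).1]
    omega
  have hsub (l : ℕ) (hl : l ∈ Ioo r N) : 2 ≤ μ.shiftedRowLen r - μ.shiftedRowLen l :=
    (mem_Icc.mp (hunion ▸ mem_union_right _ (mem_image_of_mem _ hl))).1
  have hprod := prod_Icc_two_div_sub_one hB
  rw [← hunion, prod_union (disjoint_image_hook_row_image_sub hc N),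
    prod_image (injOn_hook_row hc), prod_image fun l _ l' _ h =>
      μ.shiftedRowLen_strictAnti.injective (sub_right_injective h)] at hprod
  push_cast at hprod
  have hinv : (∏ l ∈ Ioo r N, ((μ.shiftedRowLen r : ℚ) - μ.shiftedRowLen l)
      / (μ.shiftedRowLen r - μ.shiftedRowLen l - 1)) * ∏ l ∈ Ioo r N,
        ((μ.shiftedRowLen r : ℚ) - μ.shiftedRowLen l - 1) / (μ.shiftedRowLen r - μ.shiftedRowLen l)
      = 1 := by
    rw [← prod_mul_distrib]
    refine prod_eq_one fun l hl => ?_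
    have h2 : (2 : ℚ) ≤ μ.shiftedRowLen r - μ.shiftedRowLen l := by exact_mod_cast hsub l hl
    have h0 : (μ.shiftedRowLen r : ℚ) - μ.shiftedRowLen l ≠ 0 := by linarith
    have h1 : (μ.shiftedRowLen r : ℚ) - μ.shiftedRowLen l - 1 ≠ 0 := by linarith
    field_simp
  rw [← hprod, mul_assoc, hinv, mul_one]

theorem filter_erase_eq_image_row_union_image_col (hmem : (r, q) ∈ μ.cells) :
    (μ.cells.erase (r, q)).filter (fun d => d.1 = r ∧ d.2 < q ∨ d.2 = q ∧ d.1 < r)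
      = (range q).image (fun j => (r, j)) ∪ (range r).image (fun i => (i, q)) := by
  ext ⟨i, j⟩
  simp only [mem_filter, mem_erase, mem_union, mem_image, mem_range, ne_eq, Prod.mk.injEq]
  constructor
  · rintro ⟨-, ⟨rfl, hj⟩ | ⟨rfl, hi⟩⟩
    · exact Or.inl ⟨j, hj, rfl, rfl⟩
    · exact Or.inr ⟨i, hi, rfl, rfl⟩
  · rintro (⟨j, hj, rfl, rfl⟩ | ⟨i, hi, rfl, rfl⟩)
    · exact ⟨⟨by omega, (mem_cells _).mpr (μ.up_left_mem le_rfl hj.le ((mem_cells _).mp hmem))⟩,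
        Or.inl ⟨rfl, hj⟩⟩
    · exact ⟨⟨by omega, (mem_cells _).mpr (μ.up_left_mem hi.le le_rfl ((mem_cells _).mp hmem))⟩,
        Or.inr ⟨rfl, hi⟩⟩

theorem Hprod_eq_Hprod_erase_mul (hc : (r, q) ∈ corners μ.cells) :
    (Hprod μ.cells : ℚ) = Hprod (μ.cells.erase (r, q)) *
      ((∏ j ∈ range q, (hook μ.cells (r, j) : ℚ) / (hook μ.cells (r, j) - 1)) *
        ∏ i ∈ range r, (hook μ.cells (i, q) : ℚ) / (hook μ.cells (i, q) - 1)) := by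
  have hmem : (r, q) ∈ μ.cells := mem_of_mem_filter _ hc
  have hcorner : hook μ.cells (r, q) = 1 := by
    rw [hook_cells, colLen_of_mem_corners hc, (μ.mem_corners_iff.mp hc).1]
    omega
  have hfactor (d : ℕ × ℕ) : (hook μ.cells d : ℚ) = hook (μ.cells.erase (r, q)) d *
      (if d.1 = r ∧ d.2 < q ∨ d.2 = q ∧ d.1 < r then (hook μ.cells d : ℚ) / (hook μ.cells d - 1)
        else 1) := by
    have h := hook_erase_add μ.cells hmem d
    have hpos : hook (μ.cells.erase (r, q)) d ≠ 0 := by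
      unfold hook
      omega
    split_ifs at h ⊢
    · have : (hook (μ.cells.erase (r, q)) d : ℚ) = hook μ.cells d - 1 := by
        rw [← h]
        push_cast
        ring
      have hne : (hook μ.cells d : ℚ) - 1 ≠ 0 := by
        rw [← this]
        exact_mod_cast hpos
      rw [this, mul_div_cancel₀ _ hne]
    · rw [← h, add_zero, mul_one]
  have hdisj :
      Disjoint ((range q).image (fun j => (r, j))) ((range r).image (fun i => (i, q))) := by
    simp only [disjoint_left, mem_image, mem_range, not_exists, not_and]
    rintro _ ⟨j, hj, rfl⟩ i hi h
    simp only [Prod.mk.injEq] at h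
    omega
  rw [Hprod, Hprod, Nat.cast_prod, ← mul_prod_erase _ _ hmem, hcorner, Nat.cast_one, one_mul,
    prod_congr rfl fun d _ => hfactor d, prod_mul_distrib, ← prod_filter,
    filter_erase_eq_image_row_union_image_col (mem_of_mem_filter _ hc),
    prod_union hdisj, prod_image fun _ _ _ _ h => (Prod.mk.inj h).2,
    prod_image fun _ _ _ _ h => (Prod.mk.inj h).1, Nat.cast_prod]

theorem Hprod_eq_Hprod_erase_mul_hanWeight (hc : (r, q) ∈ corners μ.cells) {N : ℕ}
    (hN : μ.colLen 0 ≤ N) :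
    (Hprod μ.cells : ℚ) = Hprod (μ.cells.erase (r, q)) *
      ((μ.shiftedRowLen r + N) * hanWeight (range N) (fun i => (μ.shiftedRowLen i : ℚ)) r) := by
  have hrN : r < N := (lt_colLen_of_mem_corners hc (Nat.zero_le q)).trans_le hN
  have hsplit : (range N).erase r = range r ∪ Ioo r N := by
    ext l
    simp only [mem_erase, mem_range, mem_union, mem_Ioo]
    omega
  have hdisj : Disjoint (range r) (Ioo r N) := by
    simp only [disjoint_left, mem_range, mem_Ioo]
    omega
  rw [Hprod_eq_Hprod_erase_mul hc, prod_hook_row_div hc hN, prod_hook_col_div hc, hanWeight,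
    hsplit, prod_union hdisj]
  ring

theorem inv_Hprod_erase_eq (hc : (r, q) ∈ corners μ.cells) {N : ℕ} (hN : μ.colLen 0 ≤ N) :
    (Hprod (μ.cells.erase (r, q)) : ℚ)⁻¹ = (Hprod μ.cells : ℚ)⁻¹ *
      ((μ.shiftedRowLen r + N) * hanWeight (range N) (fun i => (μ.shiftedRowLen i : ℚ)) r) := by
  have hne : (Hprod μ.cells : ℚ) ≠ 0 :=
    Nat.cast_ne_zero.mpr (prod_ne_zero_iff.mpr fun c _ => by unfold hook; omega)
  rw [Hprod_eq_Hprod_erase_mul_hanWeight hc hN] at hne ⊢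
  rw [mul_inv, mul_assoc, inv_mul_cancel₀ (right_ne_zero_of_mul hne), mul_one]

theorem rowLenS_erase_corner (hc : (r, q) ∈ corners μ.cells) (i : ℕ) :
    (rowLenS (μ.cells.erase (r, q)) i : ℤ) = μ.rowLen i - if i = r then 1 else 0 := by
  have hmem : (r, q) ∈ μ.cells.filter (fun d => d.1 = r) :=
    mem_filter.mpr ⟨mem_of_mem_filter _ hc, rfl⟩
  rw [rowLenS, filter_erase, ← rowLenS_cells, rowLenS]
  split_ifs with h
  · subst h
    rw [card_erase_of_mem hmem, Nat.cast_sub (card_pos.mpr ⟨_, hmem⟩)]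
    rfl
  · rw [erase_eq_of_notMem fun h' => h (mem_filter.mp h').2.symm, sub_zero]

theorem gpoly_erase_corner (hc : (r, q) ∈ corners μ.cells) :
    gpoly (μ.cells.erase (r, q)) = ∏ i ∈ range (#μ.cells - 1),
      (X + C ((μ.shiftedRowLen i : ℚ) - if i = r then 1 else 0)) := by
  rw [gpoly, card_erase_of_mem (mem_of_mem_filter _ hc)]
  refine prod_congr rfl fun i _ => ?_
  have h := congrArg (Int.cast : ℤ → ℚ) (rowLenS_erase_corner hc i)
  push_cast at h
  rw [h, shiftedRowLen]
  push_cast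
  congr 2
  ring

theorem hanWeight_shiftedRowLen_eq_zero {N k : ℕ} (hk : k + 1 < N)
    (hflat : μ.rowLen (k + 1) = μ.rowLen k) :
    hanWeight (range N) (fun i => (μ.shiftedRowLen i : ℚ)) k = 0 :=
  hanWeight_eq_zero _ _ (mem_range.mpr hk) (by omega) (by
    simp only [shiftedRowLen, hflat]
    push_cast
    ring)

theorem sum_corners_eq_sum_range {M : Type*} [AddCommMonoid M] (F : ℕ → M)
    {N : ℕ} (hN : μ.colLen 0 ≤ N) (hF : ∀ k < N, μ.rowLen (k + 1) = μ.rowLen k → F k = 0) :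
    ∑ c ∈ corners μ.cells, F c.1 = ∑ k ∈ range N, F k := by
  have hinj : Set.InjOn Prod.fst (corners μ.cells : Set (ℕ × ℕ)) := by
    rintro ⟨r, q⟩ hc ⟨r', q'⟩ hc' (rfl : r = r')
    have := (μ.mem_corners_iff.mp hc).1
    have := (μ.mem_corners_iff.mp hc').1
    simp only [Prod.mk.injEq, true_and]
    omega
  rw [← sum_image hinj]
  refine sum_subset (fun k hk => ?_) fun k hk hk' => hF k (mem_range.mp hk) ?_
  · obtain ⟨⟨r, q⟩, hc, rfl⟩ := mem_image.mp hk
    exact mem_range.mpr ((lt_colLen_of_mem_corners hc (Nat.zero_le q)).trans_le hN)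
  · by_contra hne
    have := μ.rowLen_anti k (k + 1) (Nat.le_succ k)
    exact hk' (mem_image.mpr ⟨(k, μ.rowLen k - 1), μ.mem_corners_iff.mpr ⟨by omega, by omega⟩, rfl⟩)

theorem eq_card_sub_one_of_mem_corners (hlast : μ.rowLen (#μ.cells - 1) ≠ 0)
    (hc : (r, q) ∈ corners μ.cells) : r = #μ.cells - 1 := by
  have ⟨hr, hr'⟩ := μ.mem_corners_iff.mp hc
  have hrn := (lt_colLen_of_mem_corners hc (Nat.zero_le q)).trans_le μ.colLen_zero_le_card
  have := μ.rowLen_eq_one_of_rowLen_ne_zero hlast hrn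
  by_contra hne
  have := μ.rowLen_eq_one_of_rowLen_ne_zero hlast (i := r + 1) (by omega)
  omega

theorem smul_gpoly_erase_corner_of_rowLen_eq_zero (hc : (r, q) ∈ corners μ.cells) {m : ℕ}
    (hm : #μ.cells = m + 1) (hlast : μ.rowLen m = 0) :
    ((μ.shiftedRowLen r : ℚ) + (m + 1)) • gpoly (μ.cells.erase (r, q))
      = ∏ j ∈ (range (m + 1)).erase r, (X + C (μ.shiftedRowLen j : ℚ))
        + ((μ.shiftedRowLen r : ℚ) + m) • ∏ j ∈ range m, (X + C (μ.shiftedRowLen j : ℚ)) := by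
  have hr : r ∈ range m := mem_range.mpr ((lt_colLen_of_mem_corners hc (Nat.zero_le q)).trans_le
    (μ.colLen_zero_le_of_rowLen_eq_zero hlast))
  have ha : (μ.shiftedRowLen m : ℚ) = -(m + 1) := by
    simp only [shiftedRowLen, hlast]
    push_cast
    ring
  -- `(a r + m + 1) (X + a r - 1) = (X + a m) + (a r + m) (X + a r)`, as `a m = -(m + 1)`
  rw [gpoly_erase_corner hc, hm, Nat.add_sub_cancel, ← mul_prod_erase _ _ hr, if_pos rfl,
    prod_congr rfl fun j hj => by rw [if_neg (ne_of_mem_erase hj), sub_zero], range_add_one,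
    erase_insert_of_ne (ne_of_mem_of_not_mem hr notMem_range_self).symm,
    prod_insert fun h => notMem_range_self (mem_of_mem_erase h), ← mul_prod_erase (range m) _ hr,
    ha, smul_eq_C_mul, smul_eq_C_mul]
  simp only [map_add, map_sub, map_neg, map_one, map_natCast]
  ring

theorem sum_corners_smul_gpoly_erase_of_rowLen_eq_zero (hn : 0 < #μ.cells)
    (hlast : μ.rowLen (#μ.cells - 1) = 0) :
    ∑ c ∈ corners μ.cells, (((μ.shiftedRowLen c.1 : ℚ) + #μ.cells) *
        hanWeight (range #μ.cells) (fun i => (μ.shiftedRowLen i : ℚ)) c.1) • gpoly (μ.cells.erase c)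
      = ∑ k ∈ range #μ.cells, C (hanWeight (range #μ.cells) (fun i => (μ.shiftedRowLen i : ℚ)) k) *
          ∏ j ∈ (range #μ.cells).erase k, (X + C (μ.shiftedRowLen j : ℚ)) := by
  obtain ⟨m, hm⟩ : ∃ m, #μ.cells = m + 1 := ⟨_, (Nat.succ_pred_eq_of_pos hn).symm⟩
  rw [hm, Nat.add_sub_cancel] at hlast
  have hsum := sum_hanWeight_mul_shiftedRowLen_add μ
  rw [hm] at hsum ⊢
  set a : ℕ → ℚ := fun i => μ.shiftedRowLen i
  set w := hanWeight (range (m + 1)) a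
  set L : ℕ → ℚ[X] := fun k => ∏ j ∈ (range (m + 1)).erase k, (X + C (a j))
  have hterm : ∀ c ∈ corners μ.cells, ((a c.1 + (m + 1 : ℕ)) * w c.1) • gpoly (μ.cells.erase c)
      = C (w c.1) * L c.1 + C (w c.1 * (a c.1 + m)) * ∏ j ∈ range m, (X + C (a j)) := by
    rintro ⟨r, q⟩ hc
    rw [mul_comm, mul_smul, Nat.cast_add_one, smul_gpoly_erase_corner_of_rowLen_eq_zero hc hm hlast,
      smul_add, smul_smul, smul_eq_C_mul, smul_eq_C_mul]
  have hscalar : ∑ k ∈ range m, w k * (a k + m) = w m := by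
    have ha : a m + m = -1 := by
      simp only [a, shiftedRowLen, hlast]
      push_cast
      ring
    rw [sum_range_succ] at hsum
    push_cast at hsum
    simp only [add_sub_assoc, sub_self, add_zero] at hsum
    change ∑ k ∈ range m, w k * (a k + m) + w m * (a m + m) = 0 at hsum
    linear_combination hsum - w m * ha
  rw [sum_congr rfl hterm, sum_corners_eq_sum_range
      (fun k => C (w k) * L k + C (w k * (a k + m)) * ∏ j ∈ range m, (X + C (a j)))
      (μ.colLen_zero_le_of_rowLen_eq_zero hlast) fun k hk hflat => by
        rw [show w k = 0 from hanWeight_shiftedRowLen_eq_zero (by omega) hflat]; simp,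
    sum_add_distrib, ← sum_mul, ← map_sum, hscalar, sum_range_succ _ m]
  simp only [L]
  rw [range_add_one, erase_insert notMem_range_self]

theorem sum_corners_smul_gpoly_erase_of_rowLen_ne_zero (hlast : μ.rowLen (#μ.cells - 1) ≠ 0) :
    ∑ c ∈ corners μ.cells, (((μ.shiftedRowLen c.1 : ℚ) + #μ.cells) *
        hanWeight (range #μ.cells) (fun i => (μ.shiftedRowLen i : ℚ)) c.1) • gpoly (μ.cells.erase c)
      = ∑ k ∈ range #μ.cells, C (hanWeight (range #μ.cells) (fun i => (μ.shiftedRowLen i : ℚ)) k) *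
          ∏ j ∈ (range #μ.cells).erase k, (X + C (μ.shiftedRowLen j : ℚ)) := by
  set a : ℕ → ℚ := fun i => μ.shiftedRowLen i
  set w := hanWeight (range #μ.cells) a
  set L : ℕ → ℚ[X] := fun k => ∏ j ∈ (range #μ.cells).erase k, (X + C (a j))
  have hterm : ∀ c ∈ corners μ.cells, ((a c.1 + #μ.cells) * w c.1) • gpoly (μ.cells.erase c)
      = C (w c.1) * L c.1 := by
    rintro ⟨r, q⟩ hc
    obtain rfl := eq_card_sub_one_of_mem_corners hlast hc
    have hn : 0 < #μ.cells := (lt_colLen_of_mem_corners hc (Nat.zero_le q)).trans_le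
      μ.colLen_zero_le_card |>.pos
    have ha : a (#μ.cells - 1) + #μ.cells = 1 := by
      simp only [a, shiftedRowLen, μ.rowLen_eq_one_of_rowLen_ne_zero hlast (Nat.sub_one_lt hn.ne')]
      push_cast [Nat.cast_sub hn]
      ring
    obtain ⟨m, hm⟩ : ∃ m, #μ.cells = m + 1 := ⟨_, (Nat.succ_pred_eq_of_pos hn).symm⟩
    rw [ha, one_mul, smul_eq_C_mul, gpoly_erase_corner hc]
    simp only [L]
    rw [hm, Nat.add_sub_cancel, range_add_one, erase_insert notMem_range_self]
    exact congrArg _ (prod_congr rfl fun j hj => by rw [if_neg (mem_range.mp hj).ne, sub_zero])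
  rw [sum_congr rfl hterm, sum_corners_eq_sum_range (fun k => C (w k) * L k)
    μ.colLen_zero_le_card fun k hk hflat => ?_]
  have hk : k + 1 < #μ.cells := by
    by_contra h
    obtain rfl : k = #μ.cells - 1 := by omega
    rw [Nat.sub_add_cancel (by omega), μ.rowLen_card_eq_zero] at hflat
    exact hlast hflat.symm
  rw [show w k = 0 from hanWeight_shiftedRowLen_eq_zero hk hflat, map_zero, zero_mul]

end

end YoungDiagram

/-- Han's theorem: `∑_{λ ∈ ν∖1} g_λ(x)/H_λ = (g_ν(x+1) − g_ν(x))/H_ν`. -/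
theorem han_g_function (ν : YoungDiagram) (h : ν.cells.Nonempty) :
    ∑ c ∈ corners ν.cells, (Hprod (ν.cells.erase c) : ℚ)⁻¹ • gpoly (ν.cells.erase c)
      = (Hprod ν.cells : ℚ)⁻¹ •
          ((gpoly ν.cells).comp (Polynomial.X + 1) - gpoly ν.cells) := by
  have hterm : ∀ c ∈ corners ν.cells,
      (Hprod (ν.cells.erase c) : ℚ)⁻¹ • gpoly (ν.cells.erase c) = (Hprod ν.cells : ℚ)⁻¹ •
        ((((ν.shiftedRowLen c.1 : ℚ) + #ν.cells) *
          hanWeight (range #ν.cells) (fun i => (ν.shiftedRowLen i : ℚ)) c.1) •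
            gpoly (ν.cells.erase c)) := by
    rintro ⟨r, q⟩ hc
    rw [YoungDiagram.inv_Hprod_erase_eq hc ν.colLen_zero_le_card, mul_smul]
  rw [sum_congr rfl hterm, ← smul_sum, ν.gpoly_cells, prod_X_add_C_comp_X_add_one,
    prod_add_one_sub_prod_eq_sum_hanWeight _ _ ν.injective_cast_shiftedRowLen.injOn]
  congr 1
  by_cases hlast : ν.rowLen (#ν.cells - 1) = 0
  · exact YoungDiagram.sum_corners_smul_gpoly_erase_of_rowLen_eq_zero (card_pos.mpr h) hlast
  · exact YoungDiagram.sum_corners_smul_gpoly_erase_of_rowLen_ne_zero hlast
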